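/- arXiv:2207.07072 — 6 statements merged into one kernel-verified Lean document; each statement's English description precedes it below -/
import Mathlib

section
/- For any monotone Boolean function f : {0,1}^d → {0,1}, the sensitivity of f equals the certificate complexity of f: S(f) = C(f). -/
/-- The sensitivity of `f` at `x`: the number of coordinates whose flip changes `f x`. -/
def sensAt {d : ℕ} (f : (Fin d → Bool) → Bool) (x : Fin d → Bool) : ℕ :=
  (Finset.univ.filter fun i => f (Function.update x i (!x i)) ≠ f x).card

/-- The sensitivity of `f`: the maximum over inputs of the sensitivity at that input. -/
def sensitivity {d : ℕ} (f : (Fin d → Bool) → Bool) : ℕ :=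
  Finset.univ.sup fun x => sensAt f x

/-- The certificate complexity of `f` at `x`: the minimum size of a set `W` of coordinates
such that every `y` agreeing with `x` on `W` satisfies `f y = f x`. -/
noncomputable def certAt {d : ℕ} (f : (Fin d → Bool) → Bool) (x : Fin d → Bool) : ℕ :=
  sInf {n | ∃ W : Finset (Fin d), W.card = n ∧ ∀ y, (∀ i ∈ W, y i = x i) → f y = f x}

/-- The certificate complexity of `f`. -/
noncomputable def certComplexity {d : ℕ} (f : (Fin d → Bool) → Bool) : ℕ :=
  Finset.univ.sup fun x => certAt f x

/-- indicator point of a set of coordinates -/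
def ind {d : ℕ} (W : Finset (Fin d)) : Fin d → Bool := fun i => decide (i ∈ W)

/-- co-indicator point of a set of coordinates -/
def coind {d : ℕ} (W : Finset (Fin d)) : Fin d → Bool := fun i => !decide (i ∈ W)

lemma sensAt_le_certAt {d : ℕ} (f : (Fin d → Bool) → Bool) (x : Fin d → Bool) :
    sensAt f x ≤ certAt f x := by
  have hne : {n | ∃ W : Finset (Fin d), W.card = n ∧
      ∀ y, (∀ i ∈ W, y i = x i) → f y = f x}.Nonempty := by
    refine ⟨(Finset.univ : Finset (Fin d)).card, Finset.univ, rfl, ?_⟩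
    intro y hy
    have : y = x := funext fun i => hy i (Finset.mem_univ i)
    rw [this]
  obtain ⟨W, hcard, hcert⟩ := Nat.sInf_mem hne
  rw [certAt, ← hcard]
  apply Finset.card_le_card
  intro i hi
  simp only [Finset.mem_filter, Finset.mem_univ, true_and] at hi
  by_contra hiW
  apply hi
  apply hcert
  intro j hj
  exact Function.update_of_ne (fun h => hiW (by rwa [h] at hj)) _ _

lemma certAt_le_sens_of_true {d : ℕ} {f : (Fin d → Bool) → Bool} (hf : Monotone f)
    {x : Fin d → Bool} (hx : f x = true) : certAt f x ≤ sensitivity f := by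
  classical
  set supx : Finset (Fin d) := Finset.univ.filter (fun i => x i = true) with hsup
  have hxind : ind supx = x := by
    funext i
    by_cases h : x i = true
    · simp [ind, hsup, h]
    · rw [Bool.not_eq_true] at h; simp [ind, hsup, h]
  set F : Finset (Finset (Fin d)) :=
    supx.powerset.filter (fun W => f (ind W) = true) with hF
  have hFne : F.Nonempty := by
    refine ⟨supx, ?_⟩
    simp [hF, hxind, hx]
  obtain ⟨W, hWF, hmin⟩ := Finset.exists_min_image F Finset.card hFne
  simp only [hF, Finset.mem_filter, Finset.mem_powerset] at hWF
  obtain ⟨hWsub, hWtrue⟩ := hWF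
  -- W is a certificate for x
  have hcert : ∀ y, (∀ i ∈ W, y i = x i) → f y = f x := by
    intro y hy
    have hle : ind W ≤ y := by
      intro i
      by_cases h : i ∈ W
      · have hxi : x i = true := by
          have := hWsub h
          simpa [hsup] using this
        have : y i = true := (hy i h).trans hxi
        simp [ind, h, this]
      · simp [ind, h]
    have := hf hle
    rw [hWtrue] at this
    rw [hx]
    exact le_antisymm (Bool.le_true _) this
  have h1 : certAt f x ≤ W.card := Nat.sInf_le ⟨W, rfl, hcert⟩
  -- every i ∈ W is sensitive at ind W
  have h2 : W.card ≤ sensAt f (ind W) := by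
    apply Finset.card_le_card
    intro i hi
    simp only [Finset.mem_filter, Finset.mem_univ, true_and]
    have hiW : ind W i = true := by simp [ind, hi]
    have hupd : Function.update (ind W) i (!(ind W i)) = ind (W.erase i) := by
      funext j
      by_cases h : j = i
      · subst h; simp [Function.update_self, ind, hi]
      · simp [Function.update_of_ne h, ind, Finset.mem_erase, h]
    have herase : f (ind (W.erase i)) = false := by
      by_contra hcon
      have hcon' : f (ind (W.erase i)) = true := by
        cases hfe : f (ind (W.erase i)) with
        | false => exact absurd hfe hcon
        | true => rfl
      have hmem : W.erase i ∈ F := by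
        simp only [hF, Finset.mem_filter, Finset.mem_powerset]
        exact ⟨(Finset.erase_subset _ _).trans hWsub, hcon'⟩
      have := hmin _ hmem
      have hlt := Finset.card_erase_lt_of_mem hi
      omega
    rw [hupd, herase, hWtrue]
    simp
  calc certAt f x ≤ W.card := h1
    _ ≤ sensAt f (ind W) := h2
    _ ≤ sensitivity f := Finset.le_sup (Finset.mem_univ _)

lemma certAt_le_sens_of_false {d : ℕ} {f : (Fin d → Bool) → Bool} (hf : Monotone f)
    {x : Fin d → Bool} (hx : f x = false) : certAt f x ≤ sensitivity f := by
  classical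
  set supx : Finset (Fin d) := Finset.univ.filter (fun i => x i = false) with hsup
  have hxind : coind supx = x := by
    funext i
    by_cases h : x i = false
    · simp [coind, hsup, h]
    · rw [Bool.not_eq_false] at h; simp [coind, hsup, h]
  set F : Finset (Finset (Fin d)) :=
    supx.powerset.filter (fun W => f (coind W) = false) with hF
  have hFne : F.Nonempty := by
    refine ⟨supx, ?_⟩
    simp [hF, hxind, hx]
  obtain ⟨W, hWF, hmin⟩ := Finset.exists_min_image F Finset.card hFne
  simp only [hF, Finset.mem_filter, Finset.mem_powerset] at hWF
  obtain ⟨hWsub, hWfalse⟩ := hWF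
  -- W is a certificate for x
  have hcert : ∀ y, (∀ i ∈ W, y i = x i) → f y = f x := by
    intro y hy
    have hle : y ≤ coind W := by
      intro i
      by_cases h : i ∈ W
      · have hxi : x i = false := by
          have := hWsub h
          simpa [hsup] using this
        have : y i = false := (hy i h).trans hxi
        simp [coind, h, this]
      · simp [coind, h]
    have := hf hle
    rw [hWfalse] at this
    rw [hx]
    exact le_antisymm this (Bool.false_le _)
  have h1 : certAt f x ≤ W.card := Nat.sInf_le ⟨W, rfl, hcert⟩
  -- every i ∈ W is sensitive at coind W
  have h2 : W.card ≤ sensAt f (coind W) := by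
    apply Finset.card_le_card
    intro i hi
    simp only [Finset.mem_filter, Finset.mem_univ, true_and]
    have hiW : coind W i = false := by simp [coind, hi]
    have hupd : Function.update (coind W) i (!(coind W i)) = coind (W.erase i) := by
      funext j
      by_cases h : j = i
      · subst h; simp [Function.update_self, coind, hi]
      · simp [Function.update_of_ne h, coind, Finset.mem_erase, h]
    have herase : f (coind (W.erase i)) = true := by
      by_contra hcon
      have hcon' : f (coind (W.erase i)) = false := by
        cases hfe : f (coind (W.erase i)) with
        | true => exact absurd hfe hcon
        | false => rfl
      have hmem : W.erase i ∈ F := by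
        simp only [hF, Finset.mem_filter, Finset.mem_powerset]
        exact ⟨(Finset.erase_subset _ _).trans hWsub, hcon'⟩
      have := hmin _ hmem
      have hlt := Finset.card_erase_lt_of_mem hi
      omega
    rw [hupd, herase, hWfalse]
    simp
  calc certAt f x ≤ W.card := h1
    _ ≤ sensAt f (coind W) := h2
    _ ≤ sensitivity f := Finset.le_sup (Finset.mem_univ _)

/-- for monotone Boolean functions, sensitivity equals certificate complexity. -/
theorem stmt1 (d : ℕ) (f : (Fin d → Bool) → Bool) (hf : Monotone f) :
    sensitivity f = certComplexity f := by
  apply le_antisymm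
  · apply Finset.sup_le
    intro x _
    exact le_trans (sensAt_le_certAt f x)
      (Finset.le_sup (f := fun x => certAt f x) (Finset.mem_univ x))
  · apply Finset.sup_le
    intro x _
    cases hx : f x with
    | true => exact certAt_le_sens_of_true hf hx
    | false => exact certAt_le_sens_of_false hf hx
end

section
/- Let f : {0,1}^d → {0,1} be a Boolean function and let ρ be a restriction whose fixed coordinates form a certificate of f (either a 0-certificate or a 1-certificate). Then C_0(f_ρ) + C_1(f_ρ) ≤ C_0(f) + C_1(f) - 1, where we set C_b(g) = 0 if g never takes value b. -/
/-- The function `f` restricted by `ρ`: coordinates fixed by `ρ` are overridden. -/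
def restrict {d : ℕ} (f : (Fin d → Bool) → Bool) (ρ : Fin d → Option Bool) :
    (Fin d → Bool) → Bool :=
  fun y => f fun i => (ρ i).getD (y i)

/-- The `b`-certificate complexity of `f`: the max of `certAt f x` over `x ∈ f⁻¹(b)`
(and `0` if `f` never takes the value `b`). -/
noncomputable def Cb {d : ℕ} (f : (Fin d → Bool) → Bool) (b : Bool) : ℕ :=
  (Finset.univ.filter fun x => f x = b).sup fun x => certAt f x

lemma certAt_exists {d : ℕ} (f : (Fin d → Bool) → Bool) (x : Fin d → Bool) :
    ∃ W : Finset (Fin d), W.card = certAt f x ∧ ∀ y, (∀ i ∈ W, y i = x i) → f y = f x := by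
  have h : certAt f x ∈ {n | ∃ W : Finset (Fin d), W.card = n ∧
      ∀ y, (∀ i ∈ W, y i = x i) → f y = f x} := by
    apply Nat.sInf_mem
    refine ⟨d, Finset.univ, by simp, fun y hy => ?_⟩
    have : y = x := funext fun i => hy i (Finset.mem_univ i)
    rw [this]
  exact h

lemma certAt_restrict_le {d : ℕ} (f : (Fin d → Bool) → Bool) (ρ : Fin d → Option Bool)
    (y : Fin d → Bool) :
    certAt (restrict f ρ) y ≤ certAt f (fun i => (ρ i).getD (y i)) := by
  obtain ⟨W, hcard, hW⟩ := certAt_exists f (fun i => (ρ i).getD (y i))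
  apply Nat.sInf_le
  refine ⟨W, hcard, fun y' hy' => ?_⟩
  show f (fun i => (ρ i).getD (y' i)) = f (fun i => (ρ i).getD (y i))
  refine hW _ fun i hi => ?_
  cases h : ρ i with
  | none => simp [h, hy' i hi]
  | some b => simp [h]

lemma certAt_restrict_lt {d : ℕ} (f : (Fin d → Bool) → Bool) (ρ : Fin d → Option Bool)
    (x : Fin d → Bool) (hx : ∀ y, (∀ i, ρ i ≠ none → y i = x i) → f y = f x)
    (y : Fin d → Bool) (hy : restrict f ρ y ≠ f x) :
    certAt (restrict f ρ) y + 1 ≤ certAt f (fun i => (ρ i).getD (y i)) := by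
  obtain ⟨W, hcard, hW⟩ := certAt_exists f (fun i => (ρ i).getD (y i))
  have hex : ∃ i₀ ∈ W, ρ i₀ ≠ none := by
    by_contra h
    push_neg at h
    set z : Fin d → Bool := fun i => if ρ i = none then (ρ i).getD (y i) else x i with hz
    have h1 : f z = f (fun i => (ρ i).getD (y i)) := by
      refine hW _ fun i hi => ?_
      simp [hz, h i hi]
    have h2 : f z = f x := by
      refine hx _ fun i hi => ?_
      simp [hz, hi]
    exact hy (h1.symm.trans h2)
  obtain ⟨i₀, hi₀W, hi₀⟩ := hex
  have hle : certAt (restrict f ρ) y ≤ (W.erase i₀).card := by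
    apply Nat.sInf_le
    refine ⟨W.erase i₀, rfl, fun y' hy' => ?_⟩
    show f (fun i => (ρ i).getD (y' i)) = f (fun i => (ρ i).getD (y i))
    refine hW _ fun i hi => ?_
    cases h : ρ i with
    | some b => simp [h]
    | none =>
      have hi' : i ∈ W.erase i₀ := Finset.mem_erase.2 ⟨fun he => hi₀ (he ▸ h), hi⟩
      simp [h, hy' i hi']
  have hpos : 1 ≤ W.card := Finset.card_pos.2 ⟨i₀, hi₀W⟩
  have hce : (W.erase i₀).card = W.card - 1 := Finset.card_erase_of_mem hi₀W
  omega

lemma Cb_restrict_le {d : ℕ} (f : (Fin d → Bool) → Bool) (ρ : Fin d → Option Bool)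
    (b : Bool) : Cb (restrict f ρ) b ≤ Cb f b := by
  apply Finset.sup_le
  intro y hy
  simp only [Finset.mem_filter, Finset.mem_univ, true_and] at hy
  have hmem : (fun i => (ρ i).getD (y i)) ∈
      Finset.univ.filter fun z => f z = b := by
    simp only [Finset.mem_filter, Finset.mem_univ, true_and]
    exact hy
  exact le_trans (certAt_restrict_le f ρ y) (Finset.le_sup hmem)

/-- if the fixed coordinates of `ρ` form a certificate of `f` (a 0- or a
1-certificate), then `C_0(f_ρ) + C_1(f_ρ) ≤ C_0(f) + C_1(f) - 1`. -/
theorem stmt5 (d : ℕ) (f : (Fin d → Bool) → Bool) (ρ : Fin d → Option Bool)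
    (hcert : ∃ x, ∀ y, (∀ i, ρ i ≠ none → y i = x i) → f y = f x) :
    Cb (restrict f ρ) false + Cb (restrict f ρ) true ≤ Cb f false + Cb f true - 1 := by
  obtain ⟨x, hx⟩ := hcert
  have hb1 := Cb_restrict_le f ρ false
  have hb2 := Cb_restrict_le f ρ true
  by_cases hρ : ∃ y, restrict f ρ y = !f x
  · -- the restricted function takes the value ¬(f x)
    obtain ⟨y, hy⟩ := hρ
    have hne : (Finset.univ.filter fun z => restrict f ρ z = !f x).Nonempty :=
      ⟨y, by simp [hy]⟩
    obtain ⟨y₀, hy₀, heq⟩ := Finset.exists_mem_eq_sup _ hne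
      (fun z => certAt (restrict f ρ) z)
    simp only [Finset.mem_filter, Finset.mem_univ, true_and] at hy₀
    have hkey : Cb (restrict f ρ) (!f x) + 1 ≤ Cb f (!f x) := by
      have h1 : certAt (restrict f ρ) y₀ + 1 ≤
          certAt f (fun i => (ρ i).getD (y₀ i)) := by
        refine certAt_restrict_lt f ρ x hx y₀ ?_
        rw [hy₀]; simp
      have hmem : (fun i => (ρ i).getD (y₀ i)) ∈
          Finset.univ.filter fun z => f z = !f x := by
        simp only [Finset.mem_filter, Finset.mem_univ, true_and]
        exact hy₀
      have h2 : certAt f (fun i => (ρ i).getD (y₀ i)) ≤ Cb f (!f x) :=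
        Finset.le_sup hmem
      have h3 : Cb (restrict f ρ) (!f x) = certAt (restrict f ρ) y₀ := by
        rw [Cb, heq]
      omega
    cases h : f x <;> rw [h] at hkey <;> simp at hkey <;> omega
  · push_neg at hρ
    have hfilt : (Finset.univ.filter fun z => restrict f ρ z = !f x) = ∅ := by
      apply Finset.filter_eq_empty_iff.2
      intro z _
      exact hρ z
    have hz : Cb (restrict f ρ) (!f x) = 0 := by
      rw [Cb, hfilt]; simp
    by_cases hc : ∃ z, f z = !f x
    · obtain ⟨z, hzz⟩ := hc
      have h1 : 1 ≤ certAt f z := by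
        by_contra h
        push_neg at h
        interval_cases h' : certAt f z
        obtain ⟨W, hcard, hW⟩ := certAt_exists f z
        rw [h'] at hcard
        have hWe : W = ∅ := Finset.card_eq_zero.1 hcard
        have := hW x (by simp [hWe])
        rw [this] at hzz
        simp at hzz
      have h2 : 1 ≤ Cb f (!f x) := by
        refine le_trans h1 (Finset.le_sup ?_)
        simp [hzz]
      cases h : f x <;> rw [h] at hz h2 <;> simp at hz h2 <;> omega
    · push_neg at hc
      have hall : ∀ z, f z = f x := by
        intro z
        have := hc z
        cases h : f z <;> cases h' : f x <;> simp_all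
      have hz0 : ∀ z, certAt f z = 0 := by
        intro z
        have : certAt f z ≤ 0 := by
          apply Nat.sInf_le
          exact ⟨∅, rfl, fun y' _ => (hall y').trans (hall z).symm⟩
        omega
      have hC : ∀ b, Cb f b = 0 := by
        intro b
        apply Nat.le_zero.1
        apply Finset.sup_le
        intro z _
        exact (hz0 z).le
      have hf := hC false
      have ht := hC true
      omega
end

section
/- Let f : {0,1}^d → {0,1} and let ρ_1, ..., ρ_ℓ be a nested sequence of restrictions with disjoint blocks A_1, ..., A_ℓ ⊆ [d] such that Dom(ρ_i) = A_1 ∪ ... ∪ A_i and each A_{i+1} is a certificate of the restricted function f_{ρ_i} (and A_1 is a certificate of f). If ℓ = 2·C(f) then f_{ρ_ℓ} is a constant function. -/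
/-- repeatedly restricting `f` along certificate blocks `A_1, …, A_ℓ`
(with `ρ_0` the empty restriction, `Dom(ρ_i) = A_1 ∪ ⋯ ∪ A_i`, the restrictions nested,
and each `A_i` a certificate of `f_{ρ_{i-1}}`), after `ℓ = 2·C(f)` steps the restricted
function `f_{ρ_ℓ}` is constant. -/
theorem stmt6 (d ℓ : ℕ) (f : (Fin d → Bool) → Bool)
    (ρ : ℕ → Fin d → Option Bool) (A : ℕ → Finset (Fin d))
    (hρ0 : ∀ k, ρ 0 k = none)
    (hdisj : ∀ i j, i ≠ j → Disjoint (A i) (A j))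
    (hdom : ∀ i, 1 ≤ i → i ≤ ℓ → ∀ k, (ρ i k ≠ none ↔ k ∈ (Finset.Icc 1 i).biUnion A))
    (hnest : ∀ i k b, ρ i k = some b → ρ (i + 1) k = some b)
    (hcert : ∀ i, 1 ≤ i → i ≤ ℓ →
      ∃ x, ∀ y, (∀ k ∈ A i, y k = x k) →
        restrict f (ρ (i - 1)) y = restrict f (ρ (i - 1)) x)
    (hℓ : ℓ = 2 * certComplexity f) :
    ∀ y y', restrict f (ρ ℓ) y = restrict f (ρ ℓ) y' := by
  classical
  -- Every point has a certificate of size at most `certComplexity f`.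
  have cert_ex : ∀ x : Fin d → Bool, ∃ W : Finset (Fin d),
      W.card ≤ certComplexity f ∧ ∀ z, (∀ i ∈ W, z i = x i) → f z = f x := by
    intro x
    have hmem : certAt f x ∈
        {n | ∃ W : Finset (Fin d), W.card = n ∧ ∀ y, (∀ i ∈ W, y i = x i) → f y = f x} := by
      apply Nat.sInf_mem
      refine ⟨(Finset.univ : Finset (Fin d)).card, Finset.univ, rfl, fun z hz => ?_⟩
      have : z = x := funext fun i => hz i (Finset.mem_univ i)
      rw [this]
    obtain ⟨W, hc, hp⟩ := hmem
    refine ⟨W, ?_, hp⟩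
    rw [hc]
    exact Finset.le_sup (Finset.mem_univ x)
  intro y y'
  by_contra hne
  obtain ⟨W, hWc, hW⟩ := cert_ex (fun k => (ρ ℓ k).getD (y k))
  obtain ⟨W', hWc', hW'⟩ := cert_ex (fun k => (ρ ℓ k).getD (y' k))
  -- The case `certComplexity f = 0` : `f` is constant.
  by_cases hC0 : certComplexity f = 0
  · have hWempty : W = ∅ := Finset.card_eq_zero.mp (by omega)
    exact hne (hW (fun k => (ρ ℓ k).getD (y' k))
      (fun i hi => absurd hi (by simp [hWempty]))).symm
  have hC1 : 1 ≤ certComplexity f := Nat.one_le_iff_ne_zero.mpr hC0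
  have hℓ1 : 1 ≤ ℓ := by omega
  -- nesting iterated
  have hnest' : ∀ i j k b, i ≤ j → ρ i k = some b → ρ j k = some b := by
    intro i j k b hij h
    induction j, hij using Nat.le_induction with
    | base => exact h
    | succ n hn ih => exact hnest n k b ih
  -- coordinates of `A i` are not in the domain of `ρ (i-1)`
  have hdomnone : ∀ i, 1 ≤ i → i ≤ ℓ → ∀ k ∈ A i, ρ (i - 1) k = none := by
    intro i h1 h2 k hk
    rcases Nat.lt_or_ge i 2 with h | h
    · have : i = 1 := by omega
      subst this
      exact hρ0 k
    · by_contra hno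
      have hmem := (hdom (i - 1) (by omega) (by omega) k).mp hno
      obtain ⟨m, hm, hkm⟩ := Finset.mem_biUnion.mp hmem
      simp only [Finset.mem_Icc] at hm
      have hne' : i ≠ m := by omega
      exact (Finset.disjoint_left.mp (hdisj i m hne') hk) hkm
  -- key: if a certificate `Wc` of `f` at the filled point misses `A i`, then the
  -- value of `f_{ρ (i-1)}` at the witness of step `i` equals the value at the filled point.
  have key : ∀ (yy : Fin d → Bool) (Wc : Finset (Fin d)),
      (∀ z, (∀ k ∈ Wc, z k = (ρ ℓ k).getD (yy k)) → f z = restrict f (ρ ℓ) yy) →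
      ∀ i, 1 ≤ i → i ≤ ℓ → (∀ k ∈ A i, k ∉ Wc) →
      ∀ x, (∀ z, (∀ k ∈ A i, z k = x k) →
          restrict f (ρ (i - 1)) z = restrict f (ρ (i - 1)) x) →
      restrict f (ρ (i - 1)) x = restrict f (ρ ℓ) yy := by
    intro yy Wc hWcert i h1 h2 hAW x hx
    set z : Fin d → Bool :=
      fun k => if k ∈ Wc then (ρ ℓ k).getD (yy k) else (ρ (i - 1) k).getD (x k) with hz
    have e1 : f z = restrict f (ρ ℓ) yy := hWcert z (fun k hk => by simp [hz, hk])
    have e2 : restrict f (ρ (i - 1)) z = f z := by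
      show f _ = f z
      congr 1
      funext k
      cases hρ : ρ (i - 1) k with
      | none => simp [hρ]
      | some b =>
        have hb : ρ ℓ k = some b := hnest' _ _ _ _ (by omega) hρ
        simp only [hρ, Option.getD_some, hz]
        by_cases hk : k ∈ Wc <;> simp [hk, hb, hρ]
    have e3 : restrict f (ρ (i - 1)) z = restrict f (ρ (i - 1)) x := by
      apply hx
      intro k hk
      have hkW : k ∉ Wc := hAW k hk
      simp [hz, hkW, hdomnone i h1 h2 k hk]
    rw [← e3, e2, e1]
  -- every block meets `W` or `W'`
  have hsplit : ∀ i ∈ Finset.Icc 1 ℓ, (∃ k ∈ W, k ∈ A i) ∨ (∃ k ∈ W', k ∈ A i) := by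
    intro i hi
    rw [Finset.mem_Icc] at hi
    by_contra hcon
    push_neg at hcon
    obtain ⟨hc1, hc2⟩ := hcon
    obtain ⟨x, hx⟩ := hcert i hi.1 hi.2
    have e1 := key y W hW i hi.1 hi.2 (fun k hk hkW => hc1 k hkW hk) x hx
    have e2 := key y' W' hW' i hi.1 hi.2 (fun k hk hkW => hc2 k hkW hk) x hx
    exact hne (e1.symm.trans e2)
  -- `W` and `W'` each have a coordinate outside the domain of `ρ ℓ`
  have hout : ∀ (yy yy' : Fin d → Bool) (Wc : Finset (Fin d)),
      (∀ z, (∀ k ∈ Wc, z k = (ρ ℓ k).getD (yy k)) → f z = restrict f (ρ ℓ) yy) →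
      restrict f (ρ ℓ) yy ≠ restrict f (ρ ℓ) yy' → ∃ k ∈ Wc, ρ ℓ k = none := by
    intro yy yy' Wc hWcert hneq
    by_contra h
    push_neg at h
    apply hneq
    have := hWcert (fun k => (ρ ℓ k).getD (yy' k)) ?_
    · exact this.symm
    · intro k hk
      cases hρ : ρ ℓ k with
      | none => exact absurd hρ (h k hk)
      | some b => simp [hρ]
  obtain ⟨k₀, hk₀W, hk₀⟩ := hout y y' W hW hne
  obtain ⟨k₁, hk₁W, hk₁⟩ := hout y' y W' hW' (Ne.symm hne)
  -- counting
  set S : Finset ℕ := (Finset.Icc 1 ℓ).filter (fun i => ∃ k ∈ W, k ∈ A i) with hS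
  set S' : Finset ℕ := (Finset.Icc 1 ℓ).filter (fun i => ∃ k ∈ W', k ∈ A i) with hS'
  have hsub : Finset.Icc 1 ℓ ⊆ S ∪ S' := by
    intro i hi
    rcases hsplit i hi with h | h
    · exact Finset.mem_union_left _ (Finset.mem_filter.mpr ⟨hi, h⟩)
    · exact Finset.mem_union_right _ (Finset.mem_filter.mpr ⟨hi, h⟩)
  have hAdom : ∀ i, 1 ≤ i → i ≤ ℓ → ∀ k ∈ A i, ρ ℓ k ≠ none := by
    intro i h1 h2 k hk
    exact (hdom ℓ hℓ1 le_rfl k).mpr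
      (Finset.mem_biUnion.mpr ⟨i, Finset.mem_Icc.mpr ⟨h1, h2⟩, hk⟩)
  have hcount : ∀ (Wc : Finset (Fin d)) (k' : Fin d), k' ∈ Wc → ρ ℓ k' = none →
      ((Finset.Icc 1 ℓ).filter (fun i => ∃ k ∈ Wc, k ∈ A i)).card ≤ Wc.card - 1 := by
    intro Wc k' hk'W hk'
    set T := (Finset.Icc 1 ℓ).filter (fun i => ∃ k ∈ Wc, k ∈ A i) with hT
    have hchoose : ∀ i : ℕ, ∃ k : Fin d, i ∈ T → k ∈ Wc.erase k' ∩ A i := by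
      intro i
      by_cases hi : i ∈ T
      · rw [hT, Finset.mem_filter, Finset.mem_Icc] at hi
        obtain ⟨⟨h1, h2⟩, k, hkW, hkA⟩ := hi
        refine ⟨k, fun _ => Finset.mem_inter.mpr ⟨Finset.mem_erase.mpr ⟨?_, hkW⟩, hkA⟩⟩
        rintro rfl
        exact (hAdom i h1 h2 k hkA) hk'
      · exact ⟨k', fun h => absurd h hi⟩
    choose g hg using hchoose
    have hle : T.card ≤ (Wc.erase k').card := by
      apply Finset.card_le_card_of_injOn g
      · intro i hi
        exact (Finset.mem_inter.mp (hg i hi)).1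
      · intro i hi j hj hij
        by_contra hne2
        have hgi := (Finset.mem_inter.mp (hg i hi)).2
        have hgj := (Finset.mem_inter.mp (hg j hj)).2
        exact (Finset.disjoint_left.mp (hdisj i j hne2) hgi) (hij ▸ hgj)
    have hkerase : (Wc.erase k').card = Wc.card - 1 := Finset.card_erase_of_mem hk'W
    omega
  have hcS : S.card ≤ W.card - 1 := hcount W k₀ hk₀W hk₀
  have hcS' : S'.card ≤ W'.card - 1 := hcount W' k₁ hk₁W hk₁
  have hWpos : 1 ≤ W.card := Finset.card_pos.mpr ⟨k₀, hk₀W⟩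
  have hWpos' : 1 ≤ W'.card := Finset.card_pos.mpr ⟨k₁, hk₁W⟩
  have htot : (Finset.Icc 1 ℓ).card ≤ S.card + S'.card :=
    le_trans (Finset.card_le_card hsub) (Finset.card_union_le _ _)
  have hIcc : (Finset.Icc 1 ℓ).card = ℓ := by
    rw [Nat.card_Icc]; omega
  omega
end

section
/- Let X be a linearly ordered type with top ⊤ and bottom ⊥, f : X^d → {0,1} monotone, x ∈ X^d, and define f_x : {0,1}^d → {0,1} by f_x(y) = f(x↑↓y) (snapping coordinates of x to ⊥ where y_i=0 if f(x)=1, or to ⊤ where y_i=1 if f(x)=0). Then the sensitivity of f_x is at most the sensitivity of f, where the sensitivity of f : X^d → {0,1} at u is the number of coordinates i for which there exists a ∈ X with f(u with coordinate i set to a) ≠ f(u). -/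
/-- Snapping: if `f x = 1`, keep `x i` where `y i = 1` and snap to `⊥` elsewhere;
if `f x = 0`, snap to `⊤` where `y i = 1` and keep `x i` elsewhere. -/
def snap {d : ℕ} {X : Type*} [LinearOrder X] [OrderTop X] [OrderBot X]
    (f : (Fin d → X) → Bool) (x : Fin d → X) (y : Fin d → Bool) : Fin d → X :=
  fun i =>
    if f x = true then (if y i = true then x i else ⊥)
    else (if y i = true then ⊤ else x i)

/-- Sensitivity of `g` at `u`: the number of coordinates `i` such that changing the
`i`-th coordinate of `u` to some value changes `g u`. -/
noncomputable def sensAtG {d : ℕ} {X : Type*} (g : (Fin d → X) → Bool) (u : Fin d → X) : ℕ :=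
  Set.ncard {i | ∃ a, g (Function.update u i a) ≠ g u}

lemma snap_update {d : ℕ} {X : Type*} [LinearOrder X] [OrderTop X] [OrderBot X]
    (f : (Fin d → X) → Bool) (x : Fin d → X) (y : Fin d → Bool) (i : Fin d) (b : Bool) :
    snap f x (Function.update y i b) =
      Function.update (snap f x y) i
        (if f x = true then (if b = true then x i else ⊥)
         else (if b = true then ⊤ else x i)) := by
  funext j
  by_cases h : j = i
  · subst h; simp [snap, Function.update]
  · simp [snap, Function.update, h]

lemma sensAtG_le_d {d : ℕ} {X : Type*} (g : (Fin d → X) → Bool) (u : Fin d → X) :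
    sensAtG g u ≤ d := by
  calc sensAtG g u ≤ (Set.univ : Set (Fin d)).ncard :=
        Set.ncard_le_ncard (Set.subset_univ _) Set.finite_univ
    _ = d := by simp [Set.ncard_univ]

/-- the sensitivity of `f_x` is at most the sensitivity of `f`. -/
theorem stmt12 (d : ℕ) (X : Type*) [LinearOrder X] [OrderTop X] [OrderBot X]
    (f : (Fin d → X) → Bool) (hf : Monotone f) (x : Fin d → X) :
    (⨆ y : Fin d → Bool, sensAtG (fun y' => f (snap f x y')) y) ≤
      ⨆ u : Fin d → X, sensAtG f u := by
  apply ciSup_le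
  intro y
  have hb : BddAbove (Set.range fun u : Fin d → X => sensAtG f u) := by
    refine ⟨d, ?_⟩
    rintro n ⟨u, rfl⟩
    exact sensAtG_le_d f u
  refine le_trans ?_ (le_ciSup hb (snap f x y))
  apply Set.ncard_le_ncard ?_ (Set.toFinite _)
  intro i hi
  obtain ⟨b, hbne⟩ := hi
  refine ⟨if f x = true then (if b = true then x i else ⊥)
         else (if b = true then ⊤ else x i), ?_⟩
  rw [← snap_update]
  exact hbne
end

section
/- Let X be a linearly ordered type with top ⊤ and bottom ⊥, f : X^d → {0,1} monotone, x ∈ X^d with f(x)=1, and define f_x(y) = f(x↓y) with (x↓y)_i = x_i if y_i=1 and ⊥ otherwise. If x' ∈ X^d is a counterfactual for x (f(x') = 0), and y ∈ {0,1}^d is defined by y_i = 0 iff x'_i ≠ x_i, then f_x(y) = 0, and the Hamming distance from y to 1^d equals |{i : x'_i ≠ x_i}|. -/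
/-- Snapping down: `(x↓y) i = x i` if `y i = 1`, and `⊥` otherwise. -/
def snapDown {d : ℕ} {X : Type*} [LinearOrder X] [OrderBot X] (x : Fin d → X) (y : Fin d → Bool) :
    Fin d → X :=
  fun i => if y i = true then x i else ⊥

/-- if `f x = 1`, `x'` is a counterfactual for `x`, and `y i = 0` iff
`x' i ≠ x i`, then `f_x(y) = f(x↓y) = 0` and the Hamming distance from `y` to `1^d`
equals the number of coordinates where `x'` differs from `x`. -/
theorem stmt14 (d : ℕ) (X : Type*) [LinearOrder X] [OrderTop X] [OrderBot X]
    (f : (Fin d → X) → Bool) (hf : Monotone f)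
    (x : Fin d → X) (hx : f x = true)
    (x' : Fin d → X) (hx' : f x' = false)
    (y : Fin d → Bool) (hy : y = fun i => decide (x' i = x i)) :
    f (snapDown x y) = false ∧
      hammingDist y (fun _ => true) =
        (Finset.univ.filter fun i => x' i ≠ x i).card := by
  constructor
  · have hle : snapDown x y ≤ x' := by
      intro i
      simp only [snapDown, hy]
      by_cases h : x' i = x i
      · simp [h]
      · simp [h]
    have := hf hle
    rw [hx'] at this
    exact le_bot_iff.mp this
  · unfold hammingDist
    congr 1
    ext i
    simp [hy]
end

section
/- Let X be a linearly ordered type with top ⊤ and bottom ⊥, f : X^d → {0,1} monotone, x ∈ X^d with f(x)=1, and f_x(y) = f(x↓y) as above. Then the counterfactual complexity of x with respect to f equals the counterfactual complexity of 1^d with respect to f_x: min{|{i : x'_i ≠ x_i}| : f(x') = 0} = min{|{i : y_i = 0}| : f_x(y) = 0} (when these sets are nonempty). -/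
/-- for `f x = 1`, the counterfactual complexity of `x` w.r.t. `f` equals
the counterfactual complexity of `1^d` w.r.t. `f_x(y) = f(x↓y)`. -/
theorem stmt15 (d : ℕ) (X : Type*) [LinearOrder X] [OrderTop X] [OrderBot X]
    (f : (Fin d → X) → Bool) (hf : Monotone f)
    (x : Fin d → X) (hx : f x = true)
    (hne : ∃ x', f x' = false) :
    sInf {n | ∃ x' : Fin d → X, f x' = false ∧
        (Finset.univ.filter fun i => x' i ≠ x i).card = n} =
      sInf {n | ∃ y : Fin d → Bool, f (snapDown x y) = false ∧
        (Finset.univ.filter fun i => y i = false).card = n} := by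
  set A := {n | ∃ x' : Fin d → X, f x' = false ∧
        (Finset.univ.filter fun i => x' i ≠ x i).card = n} with hA
  set B := {n | ∃ y : Fin d → Bool, f (snapDown x y) = false ∧
        (Finset.univ.filter fun i => y i = false).card = n} with hB
  -- from a counterfactual x', build y
  have key : ∀ x' : Fin d → X, f x' = false →
      ∃ m ∈ B, m ≤ (Finset.univ.filter fun i => x' i ≠ x i).card := by
    intro x' hx'
    set y : Fin d → Bool := fun i => decide (x i ≤ x' i) with hy
    have hle : snapDown x y ≤ x' := by
      intro i
      simp only [snapDown, hy]
      by_cases h : x i ≤ x' i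
      · simp [h]
      · simp [h]
    have hfs : f (snapDown x y) = false := by
      have := hf hle
      rw [hx'] at this
      exact le_bot_iff.mp this
    refine ⟨_, ⟨y, hfs, rfl⟩, Finset.card_le_card ?_⟩
    intro i hi
    simp only [Finset.mem_filter, Finset.mem_univ, true_and, hy,
      decide_eq_false_iff_not] at hi ⊢
    intro h
    exact hi (h ▸ le_refl _)
  have hBne : B.Nonempty := by
    obtain ⟨x', hx'⟩ := hne
    obtain ⟨m, hm, _⟩ := key x' hx'
    exact ⟨m, hm⟩
  have hAne : A.Nonempty := by
    obtain ⟨x', hx'⟩ := hne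
    exact ⟨_, x', hx', rfl⟩
  apply le_antisymm
  · -- sInf A ≤ sInf B
    obtain ⟨y, hfy, hcard⟩ := Nat.sInf_mem hBne
    have : (Finset.univ.filter fun i => snapDown x y i ≠ x i).card ≤ sInf B := by
      rw [← hcard]
      apply Finset.card_le_card
      intro i hi
      simp only [Finset.mem_filter, Finset.mem_univ, true_and, snapDown] at hi ⊢
      by_contra h
      simp [Bool.not_eq_false] at h
      simp [h] at hi
    exact le_trans (Nat.sInf_le ⟨_, hfy, rfl⟩) this
  · -- sInf B ≤ sInf A
    obtain ⟨x', hx', hcard⟩ := Nat.sInf_mem hAne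
    obtain ⟨m, hm, hle⟩ := key x' hx'
    exact le_trans (Nat.sInf_le hm) (hcard ▸ hle)
end
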